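/- Every triangulation T of a set S of n ≥ 3 points in general position in the plane has outerplanar index at most n/3 + 1; that is, T has at most n/3 + 1 nonempty cactus layers. -/

import Mathlib

open scoped Classical

noncomputable section

/-- The plane. -/
abbrev Pt : Type := EuclideanSpace ℝ (Fin 2)

/-- The closed segment corresponding to an unordered pair of points. -/
def segOf : Sym2 Pt → Set Pt :=
  Sym2.lift ⟨fun p q => segment ℝ p q, fun p q => segment_symm ℝ p q⟩

/-- The union of all segments of an edge set. -/
def graphUnion (E : Set (Sym2 Pt)) : Set Pt := ⋃ e ∈ E, segOf e

/-- A plane straight-line graph on the point set `S`: edges are nondegenerate segments with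
endpoints in `S`, and any two distinct segments intersect in at most a common endpoint. -/
def IsPlaneGraph (S : Set Pt) (E : Set (Sym2 Pt)) : Prop :=
  (∀ e ∈ E, ¬ e.IsDiag) ∧
  (∀ e ∈ E, ∀ p ∈ e, p ∈ S) ∧
  (∀ e ∈ E, ∀ f ∈ E, e ≠ f → segOf e ∩ segOf f ⊆ {p | p ∈ e ∧ p ∈ f})

/-- A triangulation of `S`: a maximal plane straight-line graph on `S`. -/
def IsTriangulation (S : Set Pt) (E : Set (Sym2 Pt)) : Prop :=
  IsPlaneGraph S E ∧
  ∀ p ∈ S, ∀ q ∈ S, p ≠ q → IsPlaneGraph S (insert s(p, q) E) → s(p, q) ∈ E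

/-- General position: no three distinct points of `S` are collinear. -/
def GenPos (S : Set Pt) : Prop :=
  ∀ p ∈ S, ∀ q ∈ S, ∀ r ∈ S, p ≠ q → p ≠ r → q ≠ r →
    ¬ Collinear ℝ ({p, q, r} : Set Pt)

/-- The unbounded face of a plane set `U`: the union of the unbounded connected components
of the complement of `U`. -/
def outerFace (U : Set Pt) : Set Pt :=
  {x | x ∉ U ∧ ¬ Bornology.IsBounded (connectedComponentIn Uᶜ x)}

/-- The vertices of the plane graph `(S, E)` incident to the unbounded face. -/
def outerVerts (S : Set Pt) (E : Set (Sym2 Pt)) : Set Pt :=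
  {v ∈ S | v ∈ closure (outerFace (graphUnion E))}

/-- The edges of the plane graph `(S, E)` incident to the unbounded face. -/
def outerEdges (S : Set Pt) (E : Set (Sym2 Pt)) : Set (Sym2 Pt) :=
  {e ∈ E | segOf e ⊆ closure (outerFace (graphUnion E))}

/-- Remove the outermost (cactus) layer: delete the vertices incident to the unbounded face
together with all edges incident to them. -/
def peel : Set Pt × Set (Sym2 Pt) → Set Pt × Set (Sym2 Pt) :=
  fun G => (G.1 \ outerVerts G.1 G.2, {e ∈ G.2 | ∀ p ∈ e, p ∉ outerVerts G.1 G.2})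

/-- The vertices of the `i`-th cactus layer (`i ≥ 1`). -/
def layerVerts (S : Set Pt) (E : Set (Sym2 Pt)) (i : ℕ) : Set Pt :=
  outerVerts (peel^[i - 1] (S, E)).1 (peel^[i - 1] (S, E)).2

/-- The edges of the `i`-th cactus layer (`i ≥ 1`). -/
def layerEdges (S : Set Pt) (E : Set (Sym2 Pt)) (i : ℕ) : Set (Sym2 Pt) :=
  outerEdges (peel^[i - 1] (S, E)).1 (peel^[i - 1] (S, E)).2

/-- The layer index of a vertex: the (first) layer containing it. -/
def lind (S : Set Pt) (E : Set (Sym2 Pt)) (v : Pt) : ℕ :=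
  sInf {i | 1 ≤ i ∧ v ∈ layerVerts S E i}

/-- The outerplanar index: the number of nonempty cactus layers. -/
def outerplanarIndex (S : Set Pt) (E : Set (Sym2 Pt)) : ℕ :=
  {i : ℕ | 1 ≤ i ∧ (layerVerts S E i).Nonempty}.ncard

/-- Adjacency in the plane graph with edge set `E`. -/
def Adj (E : Set (Sym2 Pt)) (p q : Pt) : Prop := p ≠ q ∧ s(p, q) ∈ E

/-- The abstract simple graph underlying the edge set `E`. -/
def graphOf (E : Set (Sym2 Pt)) : SimpleGraph Pt where
  Adj p q := p ≠ q ∧ s(p, q) ∈ E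
  symm := by
    constructor
    intro p q h
    exact ⟨h.1.symm, by rw [Sym2.eq_swap]; exact h.2⟩
  loopless := ⟨fun p h => h.1 rfl⟩

end

/-!
Every hull vertex of the remaining point set is exposed by a linear functional and hence lies on
the outer face, so each layer contains all current hull vertices. A vertex that survives the
peeling is not a hull vertex, so by general position the hull had at least three vertices. Thus
every layer but the last has at least three vertices, and induction on the number of points gives
`3 · (number of layers) ≤ n + 2`.
-/

open Set Filter Topology

def IsGraphOn (S : Set Pt) (E : Set (Sym2 Pt)) : Prop := ∀ e ∈ E, ∀ p ∈ e, p ∈ S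

theorem GenPos.mono {S T : Set Pt} (hS : GenPos S) (hT : T ⊆ S) : GenPos T :=
  fun p hp q hq r hr => hS p (hT hp) q (hT hq) r (hT hr)

section OuterVertices

variable {S : Set Pt} {E : Set (Sym2 Pt)}

theorem IsGraphOn.graphUnion_subset_convexHull (hE : IsGraphOn S E) :
    graphUnion E ⊆ convexHull ℝ S := by
  simp only [graphUnion, iUnion_subset_iff]
  intro e he
  induction e using Sym2.ind with
  | _ p q =>
    exact (convex_convexHull ℝ S).segment_subset
      (subset_convexHull ℝ S (hE _ he p (Sym2.mem_mk_left p q)))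
      (subset_convexHull ℝ S (hE _ he q (Sym2.mem_mk_right p q)))

theorem not_isBounded_halfSpace_gt {f : Pt →L[ℝ] ℝ} {g : Pt} (hg : 0 < f g) (c : ℝ) :
    ¬ Bornology.IsBounded {z | c < f z} := by
  intro hb
  obtain ⟨C, hC⟩ := (f.lipschitz.isBounded_image hb).bddAbove
  set t := (|C - c| + 1) / f g
  have hft : f ((c / f g) • g + t • g) = c + |C - c| + 1 := by
    simp only [map_add, map_smul, smul_eq_mul, t]
    field_simp
    ring
  have hmem := hC ⟨_, by simp only [mem_ofPred_eq, hft]; linarith [abs_nonneg (C - c)], hft⟩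
  linarith [le_abs_self (C - c)]

/-- The open half-plane beyond the supporting line `f = f v` is connected, unbounded and misses
the drawing, so it lies in the outer face, and it accumulates at `v`. -/
theorem mem_outerVerts_of_isMaxOn (hE : IsGraphOn S E) {v : Pt} (hv : v ∈ S)
    {f : Pt →L[ℝ] ℝ} (hf : f ≠ 0) (hmax : IsMaxOn f S v) : v ∈ outerVerts S E := by
  obtain ⟨g, hg⟩ : ∃ g, 0 < f g := by
    obtain ⟨x, hx⟩ := DFunLike.ne_iff.mp hf
    rcases (show f x ≠ 0 from hx).lt_or_gt with h | h
    · exact ⟨-x, by simpa using h⟩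
    · exact ⟨x, h⟩
  set H : Set Pt := {z | f v < f z}
  have hHU : H ⊆ (graphUnion E)ᶜ := by
    intro z (hz : f v < f z) hzU
    have hhull : convexHull ℝ S ⊆ {z | f z ≤ f v} :=
      convexHull_min (isMaxOn_iff.mp hmax) (convex_halfSpace_le f.toLinearMap.isLinear _)
    exact not_lt.mpr (hhull (hE.graphUnion_subset_convexHull hzU)) hz
  have hHouter : H ⊆ outerFace (graphUnion E) := fun z hz =>
    ⟨hHU hz, fun hb => not_isBounded_halfSpace_gt hg (f v) <| hb.subset <|
      (convex_halfSpace_gt f.toLinearMap.isLinear _).isPreconnected.subset_connectedComponentIn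
        hz hHU⟩
  have hvH : v ∈ closure H := by
    refine mem_closure_of_tendsto (f := fun t : ℝ => v + t • g) (b := 𝓝[>] 0) ?_ ?_
    · exact ((continuous_const.add (continuous_id.smul continuous_const)).tendsto' 0 v
        (by simp)).mono_left nhdsWithin_le_nhds
    · filter_upwards [self_mem_nhdsWithin] with t (ht : 0 < t)
      simpa [H] using mul_pos ht hg
  exact ⟨hv, closure_mono hHouter hvH⟩

theorem mem_outerVerts_of_mem_extremePoints (hfin : S.Finite) (hE : IsGraphOn S E) {v : Pt}
    (hv : v ∈ (convexHull ℝ S).extremePoints ℝ) : v ∈ outerVerts S E := by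
  have hvS : v ∈ S := extremePoints_convexHull_subset hv
  suffices ∃ f : Pt →L[ℝ] ℝ, f ≠ 0 ∧ IsMaxOn f S v by
    obtain ⟨f, hf, hmax⟩ := this
    exact mem_outerVerts_of_isMaxOn hE hvS hf hmax
  rcases (S \ {v}).eq_empty_or_nonempty with hS | ⟨a, ha⟩
  · obtain ⟨x, hx⟩ := exists_ne (0 : Pt)
    obtain ⟨f, hfx⟩ := SeparatingDual.exists_ne_zero (R := ℝ) hx
    refine ⟨f, fun hf => hfx (by simp [hf]), isMaxOn_iff.mpr fun w hw => ?_⟩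
    rw [show w = v from sdiff_eq_empty.mp hS hw]
  · have hv' : v ∉ convexHull ℝ (S \ {v}) := fun h =>
      (((convex_convexHull ℝ S).mem_extremePoints_iff_mem_sdiff_convexHull_sdiff).mp hv).2 <|
        convexHull_mono (sdiff_subset_sdiff_left (subset_convexHull ℝ S)) h
    obtain ⟨f, u, hfu, hu⟩ := geometric_hahn_banach_closed_point (convex_convexHull ℝ _)
      ((hfin.sdiff.isCompact_convexHull ℝ).isClosed) hv'
    have hlt : ∀ w ∈ S \ {v}, f w < f v := fun w hw =>
      (hfu w (subset_convexHull ℝ _ hw)).trans hu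
    refine ⟨f, fun hf => (hlt a ha).ne (by simp [hf]), isMaxOn_iff.mpr fun w hw => ?_⟩
    by_cases hwv : w = v
    · rw [hwv]
    · exact (hlt w ⟨hw, hwv⟩).le

theorem convexHull_extremePoints_of_finite (hfin : S.Finite) :
    convexHull ℝ ((convexHull ℝ S).extremePoints ℝ) = convexHull ℝ S := by
  have h := closure_convexHull_extremePoints (hfin.isCompact_convexHull ℝ) (convex_convexHull ℝ S)
  rwa [((hfin.subset extremePoints_convexHull_subset).isCompact_convexHull ℝ).isClosed.closure_eq]
    at h

/-- `w` lies in the hull of the extreme points; were there at most two, `w` would lie on the segment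
joining them, against general position. -/
theorem three_le_ncard_extremePoints (hfin : S.Finite) (hgp : GenPos S) {w : Pt} (hw : w ∈ S)
    (hwx : w ∉ (convexHull ℝ S).extremePoints ℝ) :
    3 ≤ ((convexHull ℝ S).extremePoints ℝ).ncard := by
  set X := (convexHull ℝ S).extremePoints ℝ
  have hXS : X ⊆ S := extremePoints_convexHull_subset
  have hwX : w ∈ convexHull ℝ X := by
    rw [convexHull_extremePoints_of_finite hfin]; exact subset_convexHull ℝ S hw
  by_contra! hlt
  obtain h0 | h1 | h2 : X.ncard = 0 ∨ X.ncard = 1 ∨ X.ncard = 2 := by omega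
  · rw [(ncard_eq_zero (hfin.subset hXS)).mp h0, convexHull_empty] at hwX
    exact hwX
  · obtain ⟨a, ha⟩ := ncard_eq_one.mp h1
    rw [ha, convexHull_singleton, mem_singleton_iff] at hwX
    exact hwx (hwX ▸ ha ▸ mem_singleton a)
  · obtain ⟨a, b, hab, hX⟩ := ncard_eq_two.mp h2
    rw [hX, convexHull_pair] at hwX
    have haw : a ≠ w := fun h => hwx (h ▸ hX ▸ mem_insert a {b})
    have hbw : w ≠ b := fun h => hwx (h ▸ hX ▸ mem_insert_of_mem a rfl)
    exact hgp a (hXS (hX ▸ mem_insert a {b})) w hw b (hXS (hX ▸ mem_insert_of_mem a rfl))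
      haw hab hbw (mem_segment_iff_wbtw.mp hwX).collinear

theorem three_le_ncard_outerVerts (hfin : S.Finite) (hgp : GenPos S) (hE : IsGraphOn S E)
    {w : Pt} (hw : w ∈ S) (hwo : w ∉ outerVerts S E) : 3 ≤ (outerVerts S E).ncard :=
  (three_le_ncard_extremePoints hfin hgp hw
    fun hwx => hwo (mem_outerVerts_of_mem_extremePoints hfin hE hwx)).trans
    (ncard_le_ncard (fun _ hv => mem_outerVerts_of_mem_extremePoints hfin hE hv)
      (hfin.subset (sep_subset _ _)))

end OuterVertices

theorem IsGraphOn.peel {G : Set Pt × Set (Sym2 Pt)} (hG : IsGraphOn G.1 G.2) :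
    IsGraphOn (peel G).1 (peel G).2 :=
  fun e he p hp => ⟨hG e he.1 p hp, he.2 p hp⟩

theorem peel_iterate_fst_subset (G : Set Pt × Set (Sym2 Pt)) (k : ℕ) : (peel^[k] G).1 ⊆ G.1 := by
  induction k with
  | zero => exact subset_rfl
  | succ k ih => rw [Function.iterate_succ_apply']; exact sdiff_subset.trans ih

theorem layerVerts_subset (S : Set Pt) (E : Set (Sym2 Pt)) (i : ℕ) : layerVerts S E i ⊆ S :=
  (sep_subset _ _).trans (peel_iterate_fst_subset (S, E) (i - 1))

theorem layerVerts_peel (S : Set Pt) (E : Set (Sym2 Pt)) {i : ℕ} (hi : 1 ≤ i) :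
    layerVerts (peel (S, E)).1 (peel (S, E)).2 i = layerVerts S E (i + 1) := by
  obtain ⟨k, rfl⟩ := Nat.exists_eq_add_of_le' hi
  simp [layerVerts, Function.iterate_succ_apply]

def layerIndices (S : Set Pt) (E : Set (Sym2 Pt)) : Set ℕ :=
  {i | 1 ≤ i ∧ (layerVerts S E i).Nonempty}

theorem layerIndices_empty (E : Set (Sym2 Pt)) : layerIndices ∅ E = ∅ :=
  eq_empty_of_forall_notMem fun i ⟨_, _, hv⟩ => layerVerts_subset ∅ E i hv

theorem layerIndices_subset_insert_one_image_succ (S : Set Pt) (E : Set (Sym2 Pt)) :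
    layerIndices S E ⊆ insert 1 ((· + 1) '' layerIndices (peel (S, E)).1 (peel (S, E)).2) := by
  rintro i ⟨hi, hne⟩
  obtain rfl | hi2 := hi.eq_or_lt
  · exact mem_insert 1 _
  · obtain ⟨k, rfl⟩ := Nat.exists_eq_add_of_le' hi2
    refine mem_insert_of_mem 1 ⟨k + 1, ⟨by omega, ?_⟩, rfl⟩
    rwa [layerVerts_peel S E (by omega)]

theorem encard_layerIndices_le (S : Set Pt) (E : Set (Sym2 Pt)) :
    (layerIndices S E).encard ≤ (layerIndices (peel (S, E)).1 (peel (S, E)).2).encard + 1 := by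
  calc (layerIndices S E).encard
      ≤ (insert 1 ((· + 1) '' layerIndices (peel (S, E)).1 (peel (S, E)).2)).encard :=
        encard_le_encard (layerIndices_subset_insert_one_image_succ S E)
    _ ≤ _ := (encard_insert_le _ _).trans_eq (by rw [(add_left_injective 1).encard_image])

theorem three_mul_encard_layerIndices_le {S : Set Pt} {E : Set (Sym2 Pt)} (hfin : S.Finite)
    (hgp : GenPos S) (hE : IsGraphOn S E) : 3 * (layerIndices S E).encard ≤ S.ncard + 2 := by
  induction hn : S.ncard using Nat.strong_induction_on generalizing S E with
  | _ n ih =>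
  rcases S.eq_empty_or_nonempty with rfl | hS
  · simp [layerIndices_empty]
  have hstep := encard_layerIndices_le S E
  set G := peel (S, E)
  rcases G.1.eq_empty_or_nonempty with hG | ⟨w, hw⟩
  · rw [hG, layerIndices_empty, encard_empty, zero_add] at hstep
    have hn1 : 1 ≤ n := hn ▸ (ncard_pos hfin).mpr hS
    calc 3 * (layerIndices S E).encard ≤ 3 * 1 := by gcongr
      _ ≤ n + 2 := by norm_cast; omega
  · have h3 := three_le_ncard_outerVerts hfin hgp hE hw.1 hw.2
    have hcard : G.1.ncard = n - (outerVerts S E).ncard :=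
      hn ▸ ncard_sdiff (sep_subset _ _) (hfin.subset (sep_subset _ _))
    have hle : (outerVerts S E).ncard ≤ n := hn ▸ ncard_le_ncard (sep_subset _ _) hfin
    have ih' := ih G.1.ncard (by omega) (hfin.subset sdiff_subset) (hgp.mono sdiff_subset)
      (IsGraphOn.peel (G := (S, E)) hE) rfl
    calc 3 * (layerIndices S E).encard ≤ 3 * ((layerIndices G.1 G.2).encard + 1) := by gcongr
      _ = 3 * (layerIndices G.1 G.2).encard + 3 := by ring
      _ ≤ (G.1.ncard + 2 : ℕ) + 3 := by gcongr; exact_mod_cast ih'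
      _ ≤ n + 2 := by norm_cast; omega

theorem three_mul_outerplanarIndex_le {S : Set Pt} {E : Set (Sym2 Pt)} (hfin : S.Finite)
    (hgp : GenPos S) (hE : IsGraphOn S E) : 3 * outerplanarIndex S E ≤ S.ncard + 2 := by
  have h := three_mul_encard_layerIndices_le hfin hgp hE
  have hfin' : (layerIndices S E).Finite :=
    finite_of_encard_le_coe (k := S.ncard + 2) <| by
      push_cast; exact le_mul_of_one_le_left' (by norm_num) |>.trans h
  rw [← hfin'.cast_ncard_eq] at h
  exact_mod_cast h

theorem outerplanarIndex_le_third_general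
    (S : Set Pt) (hfin : S.Finite) (hgp : GenPos S)
    (E : Set (Sym2 Pt)) (hT : IsTriangulation S E) :
    (outerplanarIndex S E : ℝ) ≤ (S.ncard : ℝ) / 3 + 1 := by
  have h : ((3 * outerplanarIndex S E : ℕ) : ℝ) ≤ (S.ncard + 2 : ℕ) :=
    Nat.cast_le.mpr (three_mul_outerplanarIndex_le hfin hgp hT.1.2.1)
  push_cast at h
  linarith

/-- a triangulation of `n ≥ 3` points has at most `n/3 + 1` nonempty layers. -/
theorem outerplanarIndex_le_third
    (S : Set Pt) (hfin : S.Finite) (hn : 3 ≤ S.ncard) (hgp : GenPos S)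
    (E : Set (Sym2 Pt)) (hT : IsTriangulation S E) :
    (outerplanarIndex S E : ℝ) ≤ (S.ncard : ℝ) / 3 + 1 :=
  outerplanarIndex_le_third_general S hfin hgp E hT
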